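/- arXiv:2202.08499 — 3 statements merged into one kernel-verified Lean document; each statement's English description precedes it below -/
import Mathlib

section
/- The limit-inferior mean-payoff function is convex with respect to shuffling: if θ is a shuffling of two plays ρ and η in a finite graph with edge-reward function r : E → ℚ, then liminf_{n→∞} (1/n) Σ_{k<n} r(θ_k θ_{k+1}) ≥ min( liminf_{n→∞} (1/n) Σ_{k<n} r(ρ_k ρ_{k+1}), liminf_{n→∞} (1/n) Σ_{k<n} r(η_k η_{k+1}) ). -/
/-- The index just before `m` in a sequence of switching indices, with `prevIdx f 0 = 0`. -/
def prevIdx (f : ℕ → ℕ) : ℕ → ℕ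
  | 0 => 0
  | m + 1 => f m

/-- `θ` is a shuffling of `ρ` and `η`: there are strictly increasing index sequences
`k₀ < k₁ < …` and `ℓ₀ < ℓ₁ < …` with `η 0 = ρ (k m) = η (ℓ m)` for all `m`, and
`θ = ρ_0…ρ_{k₀−1} η_0…η_{ℓ₀−1} ρ_{k₀}…ρ_{k₁−1} η_{ℓ₀}…η_{ℓ₁−1} ⋯`. -/
def IsShuffling {V : Type*} (ρ η θ : ℕ → V) : Prop :=
  ∃ k l : ℕ → ℕ, StrictMono k ∧ StrictMono l ∧
    (∀ m, ρ (k m) = η 0 ∧ η (l m) = η 0) ∧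
    (∀ m n, prevIdx k m + prevIdx l m ≤ n → n < k m + prevIdx l m →
      θ n = ρ (n - prevIdx l m)) ∧
    (∀ m n, k m + prevIdx l m ≤ n → n < k m + l m → θ n = η (n - k m))

/-- The limit-inferior mean payoff of a play with respect to rewards `r`. -/
noncomputable def mpPayoff {V : Type*} (r : V → V → ℚ) (ρ : ℕ → V) : ℝ :=
  Filter.liminf
    (fun n : ℕ => (1 / (n : ℝ)) * ∑ k ∈ Finset.range n, (r (ρ k) (ρ (k + 1)) : ℝ))
    Filter.atTop

/-- Partial sum of rewards along a play. -/
noncomputable def pSum {V : Type*} (r : V → V → ℚ) (ρ : ℕ → V) (n : ℕ) : ℝ :=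
  ∑ i ∈ Finset.range n, (r (ρ i) (ρ (i + 1)) : ℝ)

lemma pSum_add {V : Type*} (r : V → V → ℚ) (ρ : ℕ → V) {a b : ℕ} (h : a ≤ b) :
    pSum r ρ b = pSum r ρ a + ∑ i ∈ Finset.Ico a b, (r (ρ i) (ρ (i + 1)) : ℝ) :=
  (Finset.sum_range_add_sum_Ico _ h).symm

lemma sum_Ico_shift (f : ℕ → ℝ) (a b c : ℕ) :
    ∑ n ∈ Finset.Ico (a + c) (b + c), f (n - c) = ∑ n ∈ Finset.Ico a b, f n := by
  rw [Finset.sum_Ico_eq_sum_range, Finset.sum_Ico_eq_sum_range]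
  have h1 : b + c - (a + c) = b - a := by omega
  rw [h1]
  exact Finset.sum_congr rfl fun i _ => by congr 1; omega

/-- the liminf mean-payoff is convex with respect to shuffling. -/
theorem stmt_1 {V : Type*} [Fintype V] (E : V → V → Prop) (r : V → V → ℚ)
    (ρ η θ : ℕ → V)
    (hρ : ∀ n, E (ρ n) (ρ (n + 1))) (hη : ∀ n, E (η n) (η (n + 1)))
    (hθ : ∀ n, E (θ n) (θ (n + 1)))
    (hsh : IsShuffling ρ η θ) :
    min (mpPayoff r ρ) (mpPayoff r η) ≤ mpPayoff r θ := by
  classical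
  obtain ⟨k, l, hk, hl, hkl, hρθ, hηθ⟩ := hsh
  -- notation
  set Sρ := pSum r ρ with hSρ
  set Sη := pSum r η with hSη
  set Sθ := pSum r θ with hSθ
  have hpK : ∀ m, prevIdx k m ≤ k m := by
    intro m
    cases m with
    | zero => exact Nat.zero_le _
    | succ j => exact (hk (Nat.lt_succ_self j)).le
  have hpL : ∀ m, prevIdx l m ≤ l m := by
    intro m
    cases m with
    | zero => exact Nat.zero_le _
    | succ j => exact (hl (Nat.lt_succ_self j)).le
  have hηpL : ∀ m, η (prevIdx l m) = η 0 := by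
    intro m
    cases m with
    | zero => rfl
    | succ j => exact (hkl j).2
  -- boundary values
  have bdy1 : ∀ m, θ (k m + prevIdx l m) = ρ (k m) := by
    intro m
    rcases lt_or_ge (prevIdx l m) (l m) with h | h
    · rw [hηθ m (k m + prevIdx l m) le_rfl (by omega), Nat.add_sub_cancel_left,
        hηpL m, (hkl m).1]
    · -- l m ≤ prevIdx l m forces m = 0, l 0 = 0
      have hm0 : m = 0 := by
        cases m with
        | zero => rfl
        | succ j => exact absurd (hl (Nat.lt_succ_self j)) (by simpa [prevIdx] using h.not_gt)
      subst hm0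
      have hl0 : l 0 = 0 := by simpa [prevIdx] using h
      have h01 : k 0 < k 1 := hk Nat.zero_lt_one
      have := hρθ 1 (k 0) (by simp [prevIdx, hl0]) (by simp [prevIdx, hl0]; omega)
      simpa [prevIdx, hl0] using this
  have bdy2 : ∀ m, θ (k m + l m) = η (l m) := by
    intro m
    have h01 : k m < k (m + 1) := hk (Nat.lt_succ_self m)
    have := hρθ (m + 1) (k m + l m) (by simp [prevIdx]) (by simp [prevIdx]; omega)
    rw [this]
    simp only [prevIdx, Nat.add_sub_cancel]
    rw [(hkl m).1, (hkl m).2]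
  -- telescoping over a ρ-block
  have step_rho : ∀ m, Sθ (prevIdx k m + prevIdx l m)
        = Sρ (prevIdx k m) + Sη (prevIdx l m) →
      ∀ n, prevIdx k m + prevIdx l m ≤ n → n ≤ k m + prevIdx l m →
      Sθ n = Sρ (n - prevIdx l m) + Sη (prevIdx l m) := by
    intro m hbase n h1 h2
    have hθval : ∀ n', prevIdx k m + prevIdx l m ≤ n' → n' ≤ k m + prevIdx l m →
        θ n' = ρ (n' - prevIdx l m) := by
      intro n' h1' h2'
      rcases eq_or_lt_of_le h2' with h | h
      · rw [h, bdy1 m]; congr 1; omega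
      · exact hρθ m n' h1' h
    have e1 : Sθ n = Sθ (prevIdx k m + prevIdx l m)
        + ∑ i ∈ Finset.Ico (prevIdx k m + prevIdx l m) n, (r (θ i) (θ (i + 1)) : ℝ) :=
      pSum_add r θ h1
    have e2 : ∑ i ∈ Finset.Ico (prevIdx k m + prevIdx l m) n, (r (θ i) (θ (i + 1)) : ℝ)
        = ∑ i ∈ Finset.Ico (prevIdx k m + prevIdx l m) n,
            (r (ρ (i - prevIdx l m)) (ρ (i - prevIdx l m + 1)) : ℝ) := by
      refine Finset.sum_congr rfl fun i hi => ?_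
      simp only [Finset.mem_Ico] at hi
      rw [hθval i hi.1 (by omega), hθval (i + 1) (by omega) (by omega)]
      have harith : i + 1 - prevIdx l m = i - prevIdx l m + 1 := by omega
      rw [harith]
    have e3 : ∑ i ∈ Finset.Ico (prevIdx k m + prevIdx l m) n,
            (r (ρ (i - prevIdx l m)) (ρ (i - prevIdx l m + 1)) : ℝ)
        = ∑ i ∈ Finset.Ico (prevIdx k m) (n - prevIdx l m),
            (r (ρ i) (ρ (i + 1)) : ℝ) := by
      have hn : n = (n - prevIdx l m) + prevIdx l m := by omega
      rw [hn]
      have : (n - prevIdx l m + prevIdx l m) - prevIdx l m = n - prevIdx l m := by omega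
      rw [this]
      exact sum_Ico_shift (fun j => (r (ρ j) (ρ (j + 1)) : ℝ)) (prevIdx k m)
        (n - prevIdx l m) (prevIdx l m)
    have e4 : Sρ (n - prevIdx l m) = Sρ (prevIdx k m)
        + ∑ i ∈ Finset.Ico (prevIdx k m) (n - prevIdx l m), (r (ρ i) (ρ (i + 1)) : ℝ) :=
      pSum_add r ρ (by omega)
    rw [e1, e2, e3, hbase, e4]; ring
  -- telescoping over an η-block
  have step_eta : ∀ m, Sθ (k m + prevIdx l m) = Sρ (k m) + Sη (prevIdx l m) →
      ∀ n, k m + prevIdx l m ≤ n → n ≤ k m + l m →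
      Sθ n = Sρ (k m) + Sη (n - k m) := by
    intro m hbase n h1 h2
    have hθval : ∀ n', k m + prevIdx l m ≤ n' → n' ≤ k m + l m →
        θ n' = η (n' - k m) := by
      intro n' h1' h2'
      rcases eq_or_lt_of_le h2' with h | h
      · rw [h, bdy2 m]; congr 1; omega
      · exact hηθ m n' h1' h
    have e1 : Sθ n = Sθ (k m + prevIdx l m)
        + ∑ i ∈ Finset.Ico (k m + prevIdx l m) n, (r (θ i) (θ (i + 1)) : ℝ) :=
      pSum_add r θ h1
    have e2 : ∑ i ∈ Finset.Ico (k m + prevIdx l m) n, (r (θ i) (θ (i + 1)) : ℝ)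
        = ∑ i ∈ Finset.Ico (k m + prevIdx l m) n,
            (r (η (i - k m)) (η (i - k m + 1)) : ℝ) := by
      refine Finset.sum_congr rfl fun i hi => ?_
      simp only [Finset.mem_Ico] at hi
      rw [hθval i hi.1 (by omega), hθval (i + 1) (by omega) (by omega)]
      have harith : i + 1 - k m = i - k m + 1 := by omega
      rw [harith]
    have e3 : ∑ i ∈ Finset.Ico (k m + prevIdx l m) n,
            (r (η (i - k m)) (η (i - k m + 1)) : ℝ)
        = ∑ i ∈ Finset.Ico (prevIdx l m) (n - k m), (r (η i) (η (i + 1)) : ℝ) := by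
      have hn : n = (n - k m) + k m := by omega
      rw [hn]
      have h4 : k m + prevIdx l m = prevIdx l m + k m := by omega
      rw [h4]
      have : (n - k m + k m) - k m = n - k m := by omega
      rw [this]
      exact sum_Ico_shift (fun j => (r (η j) (η (j + 1)) : ℝ)) (prevIdx l m)
        (n - k m) (k m)
    have e4 : Sη (n - k m) = Sη (prevIdx l m)
        + ∑ i ∈ Finset.Ico (prevIdx l m) (n - k m), (r (η i) (η (i + 1)) : ℝ) :=
      pSum_add r η (by omega)
    rw [e1, e2, e3, hbase, e4]; ring
  -- base of each block by induction
  have base : ∀ m, Sθ (prevIdx k m + prevIdx l m)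
      = Sρ (prevIdx k m) + Sη (prevIdx l m) := by
    intro m
    induction m with
    | zero => simp [prevIdx, hSρ, hSη, hSθ, pSum]
    | succ j ih =>
      have hh := hpK j
      have h1 := step_rho j ih (k j + prevIdx l j) (by omega) le_rfl
      rw [Nat.add_sub_cancel] at h1
      have hh2 := hpL j
      have h2 := step_eta j h1 (k j + l j) (by omega) le_rfl
      rw [Nat.add_sub_cancel_left] at h2
      simpa [prevIdx] using h2
  -- decomposition of an arbitrary prefix sum
  have decomp : ∀ N n, k (N + 1) + l (N + 1) ≤ n →
      ∃ a b, a + b = n ∧ N ≤ a ∧ N ≤ b ∧ Sθ n = Sρ a + Sη b := by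
    intro N n hn
    -- find the block containing n
    have hex : ∃ m, n < k m + l m := by
      refine ⟨n + 1, ?_⟩
      have h1 := hk.le_apply (x := n + 1)
      have h2 := hl.le_apply (x := n + 1)
      omega
    obtain ⟨m, hm1, hm2⟩ : ∃ m, prevIdx k m + prevIdx l m ≤ n ∧ n < k m + l m := by
      refine ⟨Nat.find hex, ?_, Nat.find_spec hex⟩
      rcases hfe : Nat.find hex with _ | j
      · simp [prevIdx]
      · have hj := Nat.find_min hex (show j < Nat.find hex by omega)
        simp only [not_lt] at hj
        simpa [prevIdx] using hj
    -- block index is large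
    have hmN : N + 2 ≤ m := by
      by_contra hc
      push_neg at hc
      have hmono : k m + l m ≤ k (N + 1) + l (N + 1) := by
        have h1 : k m ≤ k (N + 1) := hk.monotone (by omega)
        have h2 : l m ≤ l (N + 1) := hl.monotone (by omega)
        omega
      omega
    have hkN : N ≤ prevIdx k m := by
      cases m with
      | zero => omega
      | succ j =>
        have h1 : k N ≤ k j := hk.monotone (by omega)
        have h2 : N ≤ k N := hk.le_apply
        show N ≤ k j
        omega
    have hlN : N ≤ prevIdx l m := by
      cases m with
      | zero => omega
      | succ j =>
        have h1 : l N ≤ l j := hl.monotone (by omega)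
        have h2 : N ≤ l N := hl.le_apply
        show N ≤ l j
        omega
    have hpKm := hpK m
    have hpLm := hpL m
    rcases le_or_gt n (k m + prevIdx l m) with h | h
    · refine ⟨n - prevIdx l m, prevIdx l m, by omega, ?_, hlN, step_rho m (base m) n hm1 h⟩
      omega
    · have h1 := step_rho m (base m) (k m + prevIdx l m) (by omega) le_rfl
      rw [Nat.add_sub_cancel] at h1
      refine ⟨k m, n - k m, by omega, by omega, by omega,
        step_eta m h1 n (by omega) (by omega)⟩
  -- bound on rewards
  obtain ⟨M, hM⟩ : ∃ M : ℝ, ∀ p : V × V, |(r p.1 p.2 : ℝ)| ≤ M := by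
    rcases isEmpty_or_nonempty V with h | h
    · exact ⟨0, fun p => isEmptyElim p.1⟩
    · exact Finite.exists_le _
  have hM0 : 0 ≤ M := le_trans (abs_nonneg _) (hM ⟨θ 0, θ 0⟩)
  have hbound : ∀ (σ : ℕ → V) (n : ℕ), |(1 / (n : ℝ)) * pSum r σ n| ≤ M := by
    intro σ n
    rcases Nat.eq_zero_or_pos n with h | h
    · simp [h, pSum, hM0]
    have h1 : |pSum r σ n| ≤ n * M := by
      calc |pSum r σ n| ≤ ∑ i ∈ Finset.range n, |(r (σ i) (σ (i + 1)) : ℝ)| :=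
            Finset.abs_sum_le_sum_abs _ _
        _ ≤ ∑ i ∈ Finset.range n, M := Finset.sum_le_sum fun i _ => hM (σ i, σ (i + 1))
        _ = n * M := by simp [mul_comm]
    have hn : (0 : ℝ) < n := by exact_mod_cast h
    rw [abs_mul, abs_of_pos (by positivity : (0:ℝ) < 1 / n)]
    rw [div_mul_eq_mul_div, one_mul, div_le_iff₀ hn]
    linarith [h1]
  -- conclude via liminf
  set L := min (mpPayoff r ρ) (mpPayoff r η) with hL
  have key : ∀ c : ℝ, c < L → c ≤ mpPayoff r θ := by
    intro c hc
    have hcρ : c < mpPayoff r ρ := lt_of_lt_of_le hc (min_le_left _ _)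
    have hcη : c < mpPayoff r η := lt_of_lt_of_le hc (min_le_right _ _)
    have hbdρ : Filter.IsBoundedUnder (· ≥ ·) Filter.atTop
        (fun n : ℕ => (1 / (n : ℝ)) * pSum r ρ n) :=
      Filter.isBoundedUnder_of ⟨-M, fun n : ℕ => neg_le_of_abs_le (hbound ρ n)⟩
    have hbdη : Filter.IsBoundedUnder (· ≥ ·) Filter.atTop
        (fun n : ℕ => (1 / (n : ℝ)) * pSum r η n) :=
      Filter.isBoundedUnder_of ⟨-M, fun n : ℕ => neg_le_of_abs_le (hbound η n)⟩
    have hevρ := Filter.eventually_lt_of_lt_liminf (f := Filter.atTop) hcρ hbdρ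
    have hevη := Filter.eventually_lt_of_lt_liminf (f := Filter.atTop) hcη hbdη
    rw [Filter.eventually_atTop] at hevρ hevη
    obtain ⟨N₀, hN₀⟩ := hevρ
    obtain ⟨N₁, hN₁⟩ := hevη
    set N := max (max N₀ N₁) 1 with hN
    -- eventually the mean of θ is ≥ c
    have hev : ∀ᶠ n : ℕ in Filter.atTop, c ≤ (1 / (n : ℝ)) * pSum r θ n := by
      rw [Filter.eventually_atTop]
      refine ⟨k (N + 1) + l (N + 1), fun n hn => ?_⟩
      obtain ⟨a, b, hab, ha, hb, hsum⟩ := decomp N n hn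
      have ha1 : 1 ≤ a := le_trans (by omega) ha
      have hb1 : 1 ≤ b := le_trans (by omega) hb
      have haR : (0 : ℝ) < a := by exact_mod_cast ha1
      have hbR : (0 : ℝ) < b := by exact_mod_cast hb1
      have hra : c * a ≤ Sρ a := by
        have h := hN₀ a (le_trans (by omega) ha)
        have h2 := (lt_div_iff₀ haR).mp (by rwa [div_mul_eq_mul_div, one_mul] at h)
        simp only [hSρ, pSum]
        exact h2.le
      have hrb : c * b ≤ Sη b := by
        have h := hN₁ b (le_trans (by omega) hb)
        have h2 := (lt_div_iff₀ hbR).mp (by rwa [div_mul_eq_mul_div, one_mul] at h)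
        simp only [hSη, pSum]
        exact h2.le
      have hnR : (0 : ℝ) < n := by
        have : 1 ≤ n := by omega
        exact_mod_cast this
      have habR : (a : ℝ) + b = n := by exact_mod_cast hab
      rw [div_mul_eq_mul_div, one_mul, le_div_iff₀ hnR]
      calc c * n = c * a + c * b := by rw [← habR]; ring
        _ ≤ Sρ a + Sη b := add_le_add hra hrb
        _ = pSum r θ n := hsum.symm
    have hcb : Filter.IsCoboundedUnder (· ≥ ·) Filter.atTop
        (fun n : ℕ => (1 / (n : ℝ)) * pSum r θ n) :=
      Filter.isCoboundedUnder_ge_of_le _ fun n : ℕ => le_of_abs_le (hbound θ n)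
    exact Filter.le_liminf_of_le hcb hev
  by_contra hcon
  push_neg at hcon
  obtain ⟨c, hc1, hc2⟩ := exists_between hcon
  exact absurd (key c hc2) (not_le.mpr hc1)
end

section
/- Let D be a finite set and X a finite subset of ℝ^D. A point y ∈ ℝ^D belongs to the downward sealing of the convex hull of X if and only if there exists a family of coefficients α ∈ [0,1]^{D×X} with Σ_{x∈X} α_{d,x} = 1 for every d ∈ D, such that for every coordinate d ∈ D, y_d = min_{d'∈D} Σ_{x∈X} α_{d',x} · x_d. -/
/-- The downward sealing `↘Y` of a set `Y ⊆ ℝ^D`: the coordinatewise minima of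
finite nonempty subsets of `Y`. -/
def dseal {D : Type*} (Y : Set (D → ℝ)) : Set (D → ℝ) :=
  { y | ∃ (Z : Finset (D → ℝ)) (hZ : Z.Nonempty), ↑Z ⊆ Y ∧
      ∀ d, y d = Z.inf' hZ fun z => z d }

lemma centerMass_apply {D : Type*} (X : Finset (D → ℝ)) (w : (D → ℝ) → ℝ)
    (hw : ∑ x ∈ X, w x = 1) (d : D) :
    (X.centerMass w id) d = ∑ x ∈ X, w x * x d := by
  rw [Finset.centerMass_eq_of_sum_1 _ _ hw]
  simp [Finset.sum_apply]

/-- `y ∈ ↘(Conv X)` iff there are coefficients `α ∈ [0,1]^{D×X}` with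
`Σ_{x∈X} α_{d,x} = 1` for every `d`, such that each coordinate
`y d = min_{d'} Σ_{x∈X} α_{d',x} · x d`. -/
theorem stmt_2 {D : Type*} [Fintype D] [Nonempty D]
    (X : Finset (D → ℝ)) (y : D → ℝ) :
    y ∈ dseal (convexHull ℝ (X : Set (D → ℝ))) ↔
      ∃ α : D → (D → ℝ) → ℝ,
        (∀ d, ∀ x ∈ X, α d x ∈ Set.Icc (0 : ℝ) 1) ∧
        (∀ d, ∑ x ∈ X, α d x = 1) ∧
        ∀ d, y d = Finset.univ.inf' Finset.univ_nonempty
          fun d' : D => ∑ x ∈ X, α d' x * x d := by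
  constructor
  · rintro ⟨Z, hZ, hZsub, hy⟩
    -- for each coordinate d', choose the element of Z minimizing coordinate d'
    have hq : ∀ d' : D, ∃ q ∈ Z, (Z.inf' hZ fun z => z d') = q d' :=
      fun d' => Z.exists_mem_eq_inf' hZ _
    choose q hqZ hqmin using hq
    -- each q d' is in the convex hull, extract weights
    have hw : ∀ d' : D, ∃ w : (D → ℝ) → ℝ, (∀ x ∈ X, 0 ≤ w x) ∧
        (∑ x ∈ X, w x = 1) ∧ X.centerMass w id = q d' := by
      intro d'
      have := hZsub (hqZ d')
      rw [Finset.convexHull_eq] at this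
      obtain ⟨w, h1, h2, h3⟩ := this
      exact ⟨w, h1, h2, h3⟩
    choose w hw0 hw1 hwc using hw
    refine ⟨w, ?_, hw1, ?_⟩
    · intro d x hx
      refine ⟨hw0 d x hx, ?_⟩
      calc w d x ≤ ∑ x ∈ X, w d x :=
            Finset.single_le_sum (fun i hi => hw0 d i hi) hx
        _ = 1 := hw1 d
    · intro d
      have hsum : ∀ d' : D, (∑ x ∈ X, w d' x * x d) = (q d') d := by
        intro d'
        rw [← centerMass_apply X (w d') (hw1 d'), hwc d']
      apply le_antisymm
      · apply Finset.le_inf'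
        intro d' _
        rw [hsum d', hy d]
        exact Finset.inf'_le _ (hqZ d')
      · apply Finset.inf'_le_of_le _ (Finset.mem_univ d)
        rw [hsum d, ← hqmin d, ← hy d]
  · rintro ⟨α, hα01, hα1, hy⟩
    set z : D → (D → ℝ) := fun d' d => ∑ x ∈ X, α d' x * x d with hz
    refine ⟨Finset.image z Finset.univ, Finset.univ_nonempty.image z, ?_, ?_⟩
    · intro p hp
      simp only [Finset.coe_image, Set.mem_image] at hp
      obtain ⟨d', _, rfl⟩ := hp
      rw [Finset.convexHull_eq]
      refine ⟨α d', fun x hx => (hα01 d' x hx).1, hα1 d', ?_⟩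
      funext d
      rw [centerMass_apply X (α d') (hα1 d')]
    · intro d
      rw [hy d]
      rw [Finset.inf'_image]
      rfl
end

section
/- For every finite set D and every finite subset X of ℝ^D, the downward sealing of the convex hull of X is a compact subset of ℝ^D. -/
/-- for every finite set `D` and finite `X ⊆ ℝ^D`, the downward sealing of
the convex hull of `X` is compact. -/
theorem stmt_4 {D : Type*} [Fintype D] (X : Finset (D → ℝ)) :
    IsCompact (dseal (convexHull ℝ (X : Set (D → ℝ)))) := by
  classical
  rcases isEmpty_or_nonempty D with hD | hD
  · have hsub : (dseal (convexHull ℝ (X : Set (D → ℝ)))).Subsingleton :=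
      fun a _ b _ => funext fun d => hD.elim d
    exact hsub.finite.isCompact
  rcases X.eq_empty_or_nonempty with rfl | hX
  · have h : dseal (convexHull ℝ ((∅ : Finset (D → ℝ)) : Set (D → ℝ))) = ∅ := by
      ext y
      simp only [dseal, Finset.coe_empty, convexHull_empty, Set.mem_setOf_eq,
        Set.mem_empty_iff_false, iff_false, not_exists]
      rintro Z hZ ⟨hsub, -⟩
      obtain ⟨z, hz⟩ := hZ
      exact hsub hz
    rw [h]; exact isCompact_empty
  set f : (D → X → ℝ) → (D → ℝ) := fun α d =>
    Finset.univ.inf' Finset.univ_nonempty fun d' => ∑ x : X, α d' x * (x : D → ℝ) d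
    with hfdef
  set K : Set (D → X → ℝ) := Set.univ.pi fun _ => stdSimplex ℝ X with hKdef
  have hK : IsCompact K := isCompact_univ_pi fun _ => isCompact_stdSimplex ℝ X
  have hf : Continuous f := by
    refine continuous_pi fun d => ?_
    exact Continuous.finset_inf'_apply Finset.univ_nonempty fun d' _ =>
      continuous_finset_sum _ fun x _ =>
        by fun_prop
  have heq : dseal (convexHull ℝ (X : Set (D → ℝ))) = f '' K := by
    ext y
    constructor
    · rintro ⟨Z, hZ, hsub, hy⟩
      -- for each coordinate d, pick a minimizer in Z
      have hmin : ∀ d : D, ∃ z ∈ Z, (z : D → ℝ) d = Z.inf' hZ fun w => w d :=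
        fun d => (Finset.exists_mem_eq_inf' hZ fun w => w d).imp
          fun z hz => ⟨hz.1, hz.2.symm⟩
      choose m hmZ hmval using hmin
      -- each m d is in the convex hull, so get weights
      have hw : ∀ d' : D, ∃ w : (D → ℝ) → ℝ, (∀ x ∈ X, 0 ≤ w x) ∧ ∑ x ∈ X, w x = 1 ∧
          X.centerMass w id = m d' := by
        intro d'
        have := hsub (hmZ d')
        rwa [X.convexHull_eq, Set.mem_setOf_eq] at this
      choose w hw0 hw1 hwc using hw
      refine ⟨fun d' x => w d' x, ?_, ?_⟩
      · intro d' _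
        refine ⟨fun x => hw0 d' x x.2, ?_⟩
        rw [Finset.sum_coe_sort X fun x => w d' x]
        exact hw1 d'
      · funext d
        have hcm : ∀ d', (m d' : D → ℝ) d = ∑ x : X, w d' x * (x : D → ℝ) d := by
          intro d'
          have := hwc d'
          rw [Finset.centerMass_eq_of_sum_1 _ _ (hw1 d')] at this
          calc (m d' : D → ℝ) d = (∑ i ∈ X, w d' i • id i) d := by rw [this]
            _ = ∑ i ∈ X, w d' i * i d := by
                rw [Finset.sum_apply]; simp [smul_eq_mul]
            _ = ∑ x : X, w d' ↑x * (x : D → ℝ) d :=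
                (Finset.sum_coe_sort X fun i => w d' i * i d).symm
        have : f (fun d' x => w d' x) d = Z.inf' hZ fun z => z d := by
          apply le_antisymm
          · refine Finset.inf'_le_of_le _ (Finset.mem_univ d) ?_
            rw [← hcm d, hmval d]
          · rw [Finset.le_inf'_iff]
            intro d' _
            rw [← hcm d']
            exact Finset.inf'_le _ (hmZ d')
        rw [this, hy d]
    · rintro ⟨α, hα, rfl⟩
      set z : D → (D → ℝ) := fun d' => ∑ x : X, α d' x • (x : D → ℝ) with hz
      have hzconv : ∀ d', z d' ∈ convexHull ℝ (X : Set (D → ℝ)) := by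
        intro d'
        have hαd := hα d' (Set.mem_univ d')
        exact mem_convexHull_of_exists_fintype (α d') (fun x : X => (x : D → ℝ))
          (fun x => hαd.1 x) hαd.2 (fun x => x.2) rfl
      refine ⟨Finset.image z Finset.univ, (Finset.univ_nonempty.image z :
        (Finset.image z Finset.univ).Nonempty), ?_, ?_⟩
      · intro w hw
        simp only [Finset.coe_image, Set.mem_image] at hw
        obtain ⟨d', -, rfl⟩ := hw
        exact hzconv d'
      · intro d
        rw [Finset.inf'_image]
        refine Finset.inf'_congr (H := Finset.univ_nonempty) rfl fun d' _ => ?_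
        simp only [Function.comp, hz, Finset.sum_apply]
        simp [smul_eq_mul]
  rw [heq]
  exact hK.image hf
end
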